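/- Let k ≥ 1, θ_k ∈ (0, 1/k), and let y_k solve (Γ_k(-ln y_k))' = k!(1 - 1/(kθ_k)) - Γ_{k+1}(-ln y_k) on (0,1) with y_k(0)=1 and y_k(t)→0 as t→1⁻. Then θ_k satisfies the integral equation ∫_0^1 (-ln y)^{k-1} / ( k!/(kθ_k) - k! + Γ_{k+1}(-ln y) ) dy = 1. -/

import Mathlib

/-- The upper incomplete gamma function `Γ_r(x) = ∫_x^∞ t^{r-1} e^{-t} dt`. -/
noncomputable def uGamma (r : ℕ) (x : ℝ) : ℝ := ∫ t in Set.Ioi x, t ^ (r - 1) * Real.exp (-t)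

/-!
Write `F(y) = k!/(kθ) - k! + Γ_{k+1}(-ln y)`, which is positive on `(0, 1]` since `kθ < 1`.
As `Γ_k'(x) = -x^{k-1} e^{-x}`, the chain rule gives `(Γ_k(-ln y))' = (-ln y)^{k-1} y'`, so the
differential equation reads `(-ln y)^{k-1} y' = -F(y)`, i.e. `|y'| (-ln y)^{k-1} / F(y) = 1`.
Since `y_k` maps `(0, 1)` bijectively onto `(0, 1)`, the change of variables `y = y_k(t)` turns
the integral into `∫_0^1 1 dt = 1`; the one-dimensional change-of-variables formula holds for
arbitrary integrands, so no integrability near the singularity at `y = 0` has to be checked.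
-/

open MeasureTheory Set Filter Topology

lemma integrableOn_pow_mul_exp_neg_Ioi (n : ℕ) (x : ℝ) :
    IntegrableOn (fun t : ℝ => t ^ n * Real.exp (-t)) (Ioi x) := by
  refine integrable_of_isBigO_exp_neg (b := 1 / 2) (by norm_num) (by fun_prop) ?_
  have hpow := (isLittleO_pow_exp_pos_mul_atTop n (b := 1 / 2) (by norm_num)).isBigO
  refine (hpow.mul (Asymptotics.isBigO_refl (fun t : ℝ => Real.exp (-t)) atTop)).congr_right ?_
  intro t
  rw [← Real.exp_add]
  ring_nf

lemma hasDerivAt_integral_Ioi {f : ℝ → ℝ} (hf : Continuous f)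
    (hint : ∀ a, IntegrableOn f (Ioi a)) (x : ℝ) :
    HasDerivAt (fun a => ∫ t in Ioi a, f t) (-f x) x := by
  have hsplit : (fun a => ∫ t in Ioi a, f t) =
      fun a => (∫ t in Ioi 0, f t) - ∫ t in (0 : ℝ)..a, f t := by
    funext a
    rw [← intervalIntegral.integral_Ioi_sub_Ioi' (hint 0) (hint a), sub_sub_cancel]
  rw [hsplit]
  exact (hf.integral_hasStrictDerivAt 0 x).hasDerivAt.const_sub _

lemma uGamma_hasDerivAt (r : ℕ) (x : ℝ) :
    HasDerivAt (uGamma r) (-(x ^ (r - 1) * Real.exp (-x))) x :=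
  hasDerivAt_integral_Ioi (by fun_prop) (integrableOn_pow_mul_exp_neg_Ioi (r - 1)) x

lemma uGamma_nonneg (r : ℕ) {x : ℝ} (hx : 0 ≤ x) : 0 ≤ uGamma r x :=
  setIntegral_nonneg measurableSet_Ioi fun _ ht =>
    mul_nonneg (pow_nonneg (hx.trans (le_of_lt ht)) _) (Real.exp_nonneg _)

lemma hasDerivAt_uGamma_neg_log {y : ℝ → ℝ} {y' t : ℝ} (r : ℕ) (hy : HasDerivAt y y' t)
    (hpos : 0 < y t) :
    HasDerivAt (fun s => uGamma r (-Real.log (y s))) ((-Real.log (y t)) ^ (r - 1) * y') t := by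
  refine ((uGamma_hasDerivAt r _).comp t (hy.log hpos.ne').fun_neg).congr_deriv ?_
  rw [neg_neg, Real.exp_log hpos]
  field_simp

lemma abs_deriv_mul_pow_neg_log_div_eq_one {y : ℝ → ℝ} {t F : ℝ} (r : ℕ)
    (hy : DifferentiableAt ℝ y t) (hyt : y t ∈ Ioc 0 1) (hF : 0 < F)
    (hode : deriv (fun s => uGamma r (-Real.log (y s))) t = -F) :
    |deriv y t| * ((-Real.log (y t)) ^ (r - 1) / F) = 1 := by
  rw [(hasDerivAt_uGamma_neg_log r hy.hasDerivAt hyt.1).deriv] at hode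
  have hx : 0 ≤ -Real.log (y t) := neg_nonneg.mpr (Real.log_nonpos hyt.1.le hyt.2)
  calc |deriv y t| * ((-Real.log (y t)) ^ (r - 1) / F)
      = |(-Real.log (y t)) ^ (r - 1) * deriv y t| / F := by
        rw [abs_mul, abs_of_nonneg (pow_nonneg hx _)]; ring
    _ = 1 := by rw [hode, abs_neg, abs_of_pos hF, div_self hF.ne']

lemma image_Ioo_eq_Ioo_of_strictAntiOn {f : ℝ → ℝ} {a b c : ℝ} (hab : a < b)
    (hf : ContinuousOn f (Ico a b)) (hanti : StrictAntiOn f (Ico a b))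
    (hc : ∀ t ∈ Ioo a b, c < f t) (hfb : Tendsto f (𝓝[<] b) (𝓝 c)) :
    f '' Ioo a b = Ioo c (f a) := by
  refine Subset.antisymm ?_ fun v hv => ?_
  · rintro _ ⟨t, ht, rfl⟩
    exact ⟨hc t ht, hanti (left_mem_Ico.mpr hab) (Ioo_subset_Ico_self ht) ht.1⟩
  obtain ⟨s, hsv, hs⟩ := ((hfb.eventually (gt_mem_nhds hv.1)).and
    (Ioo_mem_nhdsLT hab)).exists
  obtain ⟨t, ht, rfl⟩ := intermediate_value_Ioo' hs.1.le
    (hf.mono (Icc_subset_Ico_right hs.2)) ⟨hsv, hv.2⟩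
  exact ⟨t, ⟨ht.1, ht.2.trans hs.2⟩, rfl⟩

theorem stmt11_general (k : ℕ) (θ : ℝ) (hθ : θ ∈ Set.Ioo (0 : ℝ) (1 / k))
    (yk : ℝ → ℝ)
    (hyval : ∀ t ∈ Set.Ico (0 : ℝ) 1, yk t ∈ Set.Ioc (0 : ℝ) 1)
    (hydiff : ∀ t ∈ Set.Ico (0 : ℝ) 1, DifferentiableAt ℝ yk t)
    (hanti : StrictAntiOn yk (Set.Ico 0 1))
    (hy0 : yk 0 = 1)
    (hy1 : Filter.Tendsto yk (nhdsWithin 1 (Set.Iio 1)) (nhds 0))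
    (hode : ∀ t ∈ Set.Ioo (0 : ℝ) 1,
      deriv (fun s => uGamma k (-Real.log (yk s))) t
        = (Nat.factorial k : ℝ) * (1 - 1 / (k * θ)) - uGamma (k + 1) (-Real.log (yk t))) :
    ∫ y in (0 : ℝ)..1,
        (-Real.log y) ^ (k - 1) /
          ((Nat.factorial k : ℝ) / (k * θ) - (Nat.factorial k : ℝ)
            + uGamma (k + 1) (-Real.log y)) = 1 := by
  obtain ⟨hθ0, hθ1⟩ := hθ
  have hk : (0 : ℝ) < k := one_div_pos.mp (hθ0.trans hθ1)
  have hkθ1 : (k : ℝ) * θ < 1 := (lt_div_iff₀ hθ0).mp ((lt_one_div hθ0 hk).mp hθ1)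
  set c : ℝ := (Nat.factorial k : ℝ) / (k * θ) - (Nat.factorial k : ℝ)
  have hc : 0 < c := sub_pos.mpr <| (lt_div_iff₀ (mul_pos hk hθ0)).mpr <|
    mul_lt_of_lt_one_right (by positivity) hkθ1
  set h : ℝ → ℝ := fun y => (-Real.log y) ^ (k - 1) / (c + uGamma (k + 1) (-Real.log y))
  have hIco : Ioo (0 : ℝ) 1 ⊆ Ico 0 1 := Ioo_subset_Ico_self
  have himage : yk '' Ioo 0 1 = Ioo 0 1 := by
    simpa only [hy0] using image_Ioo_eq_Ioo_of_strictAntiOn one_pos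
      (fun t ht => (hydiff t ht).continuousAt.continuousWithinAt) hanti
      (fun t ht => (hyval t (hIco ht)).1) hy1
  have hjac : ∀ t ∈ Ioo (0 : ℝ) 1, |deriv yk t| * h (yk t) = 1 := by
    intro t ht
    have hyt := hyval t (hIco ht)
    refine abs_deriv_mul_pow_neg_log_div_eq_one k (hydiff t (hIco ht)) hyt ?_ ?_
    · exact add_pos_of_pos_of_nonneg hc
        (uGamma_nonneg _ (neg_nonneg.mpr (Real.log_nonpos hyt.1.le hyt.2)))
    · rw [hode t ht]; ring
  calc ∫ y in (0 : ℝ)..1, h y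
      = ∫ y in yk '' Ioo 0 1, h y := by
        rw [himage, intervalIntegral.integral_of_le zero_le_one, integral_Ioc_eq_integral_Ioo]
    _ = ∫ t in Ioo 0 1, |deriv yk t| * h (yk t) :=
        integral_image_eq_integral_abs_deriv_smul measurableSet_Ioo
          (fun t ht => (hydiff t (hIco ht)).hasDerivAt.hasDerivWithinAt)
          (hanti.injOn.mono hIco) h
    _ = ∫ _ in Ioo (0 : ℝ) 1, (1 : ℝ) := setIntegral_congr_fun measurableSet_Ioo hjac
    _ = 1 := by simp

/-- If `y_k` solves `(Γ_k(-ln y_k))' = k!(1 - 1/(kθ_k)) - Γ_{k+1}(-ln y_k)` on `(0,1)` with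
`y_k(0)=1` and `y_k(t) → 0` as `t → 1⁻`, `y_k` strictly decreasing, then `θ_k` satisfies
`∫_0^1 (-ln y)^{k-1} / (k!/(kθ_k) - k! + Γ_{k+1}(-ln y)) dy = 1`. -/
theorem stmt11 (k : ℕ) (hk : 1 ≤ k) (θ : ℝ) (hθ : θ ∈ Set.Ioo (0 : ℝ) (1 / k))
    (yk : ℝ → ℝ)
    (hyval : ∀ t ∈ Set.Ico (0 : ℝ) 1, yk t ∈ Set.Ioc (0 : ℝ) 1)
    (hydiff : ∀ t ∈ Set.Ico (0 : ℝ) 1, DifferentiableAt ℝ yk t)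
    (hanti : StrictAntiOn yk (Set.Ico 0 1))
    (hy0 : yk 0 = 1)
    (hy1 : Filter.Tendsto yk (nhdsWithin 1 (Set.Iio 1)) (nhds 0))
    (hode : ∀ t ∈ Set.Ioo (0 : ℝ) 1,
      deriv (fun s => uGamma k (-Real.log (yk s))) t
        = (Nat.factorial k : ℝ) * (1 - 1 / (k * θ)) - uGamma (k + 1) (-Real.log (yk t))) :
    ∫ y in (0 : ℝ)..1,
        (-Real.log y) ^ (k - 1) /
          ((Nat.factorial k : ℝ) / (k * θ) - (Nat.factorial k : ℝ)
            + uGamma (k + 1) (-Real.log y)) = 1 :=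
  stmt11_general k θ hθ yk hyval hydiff hanti hy0 hy1 hode
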